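/- Let π: 𝒩 → V be a smooth vector bundle over a manifold V with a symplectic form ω, and Ω a fiberwise symplectic form on 𝒩 with a compatible connection ∇. Then the closed 2-form ω̂ = π*ω + (1/2)d(ι_{ζ_𝒩}Ω_∇) on the total space of 𝒩 is nondegenerate at every point of the zero section V ⊂ 𝒩, and hence is symplectic on a neighborhood of V in 𝒩. -/

import Mathlib

/-- Exterior derivative of an (unbundled) 1-form on a normed space. -/
noncomputable def extD1 {X : Type*} [NormedAddCommGroup X] [NormedSpace ℝ X]
    (μ : X → X → ℝ) (p u v : X) : ℝ :=
  fderiv ℝ (fun q => μ q v) p u - fderiv ℝ (fun q => μ q u) p v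

/-- Exterior derivative of an (unbundled) 2-form on a normed space. -/
noncomputable def extD2 {X : Type*} [NormedAddCommGroup X] [NormedSpace ℝ X]
    (β : X → X → X → ℝ) (p u v w : X) : ℝ :=
  fderiv ℝ (fun q => β q v w) p u - fderiv ℝ (fun q => β q u w) p v
    + fderiv ℝ (fun q => β q u v) p w

/-- The 1-form `(1/2)·ι_{ζ_𝒩}Ω_∇` on the total space `E × F` of the trivialized bundle
`𝒩`, for a fiberwise 2-form `Ω` and the connection `∇ = d + A`: the vertical part of a
tangent vector `w` at `(x,f)` is `w.2 - A x w.1 f`. -/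
noncomputable def connMu2 (n m : ℕ)
    (Ω : (Fin n → ℝ) → ((Fin m → ℝ) →L[ℝ] (Fin m → ℝ) →L[ℝ] ℝ))
    (A : (Fin n → ℝ) → ((Fin n → ℝ) →L[ℝ] ((Fin m → ℝ) →L[ℝ] (Fin m → ℝ)))) :
    ((Fin n → ℝ) × (Fin m → ℝ)) → ((Fin n → ℝ) × (Fin m → ℝ)) → ℝ :=
  fun p w => (1 / 2) * Ω p.1 p.2 (w.2 - A p.1 w.1 p.2)

/-- The closed 2-form `ω̂ = π*ω + (1/2)·d(ι_{ζ_𝒩}Ω_∇)` of (2.9) on the total space. -/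
noncomputable def omegaHat2 (n m : ℕ)
    (ω : (Fin n → ℝ) → ((Fin n → ℝ) →L[ℝ] (Fin n → ℝ) →L[ℝ] ℝ))
    (Ω : (Fin n → ℝ) → ((Fin m → ℝ) →L[ℝ] (Fin m → ℝ) →L[ℝ] ℝ))
    (A : (Fin n → ℝ) → ((Fin n → ℝ) →L[ℝ] ((Fin m → ℝ) →L[ℝ] (Fin m → ℝ)))) :
    ((Fin n → ℝ) × (Fin m → ℝ)) → ((Fin n → ℝ) × (Fin m → ℝ)) →
      ((Fin n → ℝ) × (Fin m → ℝ)) → ℝ :=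
  fun p u v => ω p.1 u.1 v.1 + extD1 (connMu2 n m Ω A) p u v

section Aux

variable {n m : ℕ}
  {Ω : (Fin n → ℝ) → ((Fin m → ℝ) →L[ℝ] (Fin m → ℝ) →L[ℝ] ℝ)}
  {A : (Fin n → ℝ) → ((Fin n → ℝ) →L[ℝ] ((Fin m → ℝ) →L[ℝ] (Fin m → ℝ)))}

lemma mu_add_right (q v w : (Fin n → ℝ) × (Fin m → ℝ)) :
    connMu2 n m Ω A q (v + w) = connMu2 n m Ω A q v + connMu2 n m Ω A q w := by
  simp only [connMu2, Prod.fst_add, Prod.snd_add, map_add, ContinuousLinearMap.add_apply]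
  rw [add_sub_add_comm, map_add]
  ring

lemma mu_smul_right (c : ℝ) (q v : (Fin n → ℝ) × (Fin m → ℝ)) :
    connMu2 n m Ω A q (c • v) = c * connMu2 n m Ω A q v := by
  simp only [connMu2, Prod.smul_fst, Prod.smul_snd, map_smul, ContinuousLinearMap.smul_apply]
  rw [← smul_sub, map_smul]
  simp [smul_eq_mul]; ring

lemma mu_contDiff (hΩ : ContDiff ℝ (⊤ : ℕ∞) Ω) (hA : ContDiff ℝ (⊤ : ℕ∞) A)
    (v : (Fin n → ℝ) × (Fin m → ℝ)) :
    ContDiff ℝ (⊤ : ℕ∞) (fun q => connMu2 n m Ω A q v) := by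
  unfold connMu2
  exact contDiff_const.mul
    (((hΩ.comp contDiff_fst).clm_apply contDiff_snd).clm_apply
      (contDiff_const.sub (((hA.comp contDiff_fst).clm_apply contDiff_const).clm_apply
        contDiff_snd)))

lemma mu_diff (hΩ : ContDiff ℝ (⊤ : ℕ∞) Ω) (hA : ContDiff ℝ (⊤ : ℕ∞) A)
    (v p : (Fin n → ℝ) × (Fin m → ℝ)) :
    DifferentiableAt ℝ (fun q => connMu2 n m Ω A q v) p :=
  (mu_contDiff hΩ hA v).differentiable (by simp) p

lemma fderiv_mu_zero (hΩ : ContDiff ℝ (⊤ : ℕ∞) Ω) (hA : ContDiff ℝ (⊤ : ℕ∞) A)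
    (x : Fin n → ℝ) (v u : (Fin n → ℝ) × (Fin m → ℝ)) :
    fderiv ℝ (fun q => connMu2 n m Ω A q v) (x, (0 : Fin m → ℝ)) u
      = (1 / 2) * Ω x u.2 v.2 := by
  set p₀ : (Fin n → ℝ) × (Fin m → ℝ) := (x, 0) with hp₀
  have h1 : HasFDerivAt (fun q : (Fin n → ℝ) × (Fin m → ℝ) => Ω q.1)
      ((fderiv ℝ Ω x).comp (ContinuousLinearMap.fst ℝ _ _)) p₀ :=
    by have := ((hΩ.differentiable (by simp) x).hasFDerivAt).comp p₀
        (hasFDerivAt_fst (𝕜 := ℝ) (E := Fin n → ℝ) (F := Fin m → ℝ)); exact this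
  have h2 : HasFDerivAt (fun q : (Fin n → ℝ) × (Fin m → ℝ) => q.2)
      (ContinuousLinearMap.snd ℝ _ _) p₀ := hasFDerivAt_snd
  have h3 := h1.clm_apply h2
  have h4 : HasFDerivAt (fun q : (Fin n → ℝ) × (Fin m → ℝ) => A q.1)
      ((fderiv ℝ A x).comp (ContinuousLinearMap.fst ℝ _ _)) p₀ :=
    by have := ((hA.differentiable (by simp) x).hasFDerivAt).comp p₀
        (hasFDerivAt_fst (𝕜 := ℝ) (E := Fin n → ℝ) (F := Fin m → ℝ)); exact this
  have h5 := h4.clm_apply (hasFDerivAt_const v.1 p₀)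
  have h6 := h5.clm_apply h2
  have h7 := (hasFDerivAt_const v.2 p₀).sub h6
  have h8 := h3.clm_apply h7
  have h9 := h8.const_mul (1/2 : ℝ)
  have : fderiv ℝ (fun q => connMu2 n m Ω A q v) p₀ = _ := h9.fderiv
  rw [this]
  simp [p₀, ContinuousLinearMap.comp_apply, ContinuousLinearMap.flip_apply]

end Aux

lemma alt_antisym {G : Type*} [NormedAddCommGroup G] [NormedSpace ℝ G]
    (B : G →L[ℝ] G →L[ℝ] ℝ) (hB : ∀ φ, B φ φ = 0) (φ ψ : G) : B ψ φ = - B φ ψ := by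
  have h := hB (φ + ψ)
  simp only [map_add, ContinuousLinearMap.add_apply, hB] at h
  linarith [hB φ, hB ψ]

section Main

variable {n m : ℕ}
  {ω : (Fin n → ℝ) → ((Fin n → ℝ) →L[ℝ] (Fin n → ℝ) →L[ℝ] ℝ)}
  {Ω : (Fin n → ℝ) → ((Fin m → ℝ) →L[ℝ] (Fin m → ℝ) →L[ℝ] ℝ)}
  {A : (Fin n → ℝ) → ((Fin n → ℝ) →L[ℝ] ((Fin m → ℝ) →L[ℝ] (Fin m → ℝ)))}

lemma omegaHat_zero (hΩ : ContDiff ℝ (⊤ : ℕ∞) Ω) (hA : ContDiff ℝ (⊤ : ℕ∞) A)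
    (hΩ_alt : ∀ x φ, Ω x φ φ = 0)
    (x : Fin n → ℝ) (u v : (Fin n → ℝ) × (Fin m → ℝ)) :
    omegaHat2 n m ω Ω A (x, 0) u v = ω x u.1 v.1 + Ω x u.2 v.2 := by
  simp only [omegaHat2, extD1, fderiv_mu_zero hΩ hA]
  rw [alt_antisym (Ω x) (hΩ_alt x) u.2 v.2]
  ring

-- linearity of omegaHat2 p in each slot
lemma omegaHat_add_right (hΩ : ContDiff ℝ (⊤ : ℕ∞) Ω) (hA : ContDiff ℝ (⊤ : ℕ∞) A)
    (p u v w : (Fin n → ℝ) × (Fin m → ℝ)) :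
    omegaHat2 n m ω Ω A p u (v + w)
      = omegaHat2 n m ω Ω A p u v + omegaHat2 n m ω Ω A p u w := by
  simp only [omegaHat2, extD1]
  have h : (fun q => connMu2 n m Ω A q (v + w))
      = fun q => connMu2 n m Ω A q v + connMu2 n m Ω A q w := by
    funext q; exact mu_add_right q v w
  rw [h, fderiv_fun_add (mu_diff hΩ hA v p) (mu_diff hΩ hA w p)]
  simp only [Prod.fst_add, map_add, ContinuousLinearMap.add_apply]
  ring

lemma omegaHat_smul_right (hΩ : ContDiff ℝ (⊤ : ℕ∞) Ω) (hA : ContDiff ℝ (⊤ : ℕ∞) A)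
    (c : ℝ) (p u v : (Fin n → ℝ) × (Fin m → ℝ)) :
    omegaHat2 n m ω Ω A p u (c • v) = c * omegaHat2 n m ω Ω A p u v := by
  simp only [omegaHat2, extD1]
  have h : (fun q => connMu2 n m Ω A q (c • v))
      = fun q => c • connMu2 n m Ω A q v := by
    funext q; rw [mu_smul_right c q v]; simp [smul_eq_mul]
  rw [h, fderiv_fun_const_smul (mu_diff hΩ hA v p) c]
  simp only [Prod.smul_fst, map_smul, ContinuousLinearMap.smul_apply, smul_eq_mul]
  ring

lemma omegaHat_add_left (hΩ : ContDiff ℝ (⊤ : ℕ∞) Ω) (hA : ContDiff ℝ (⊤ : ℕ∞) A)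
    (p u w v : (Fin n → ℝ) × (Fin m → ℝ)) :
    omegaHat2 n m ω Ω A p (u + w) v
      = omegaHat2 n m ω Ω A p u v + omegaHat2 n m ω Ω A p w v := by
  simp only [omegaHat2, extD1]
  have h : (fun q => connMu2 n m Ω A q (u + w))
      = fun q => connMu2 n m Ω A q u + connMu2 n m Ω A q w := by
    funext q; exact mu_add_right q u w
  rw [h, fderiv_fun_add (mu_diff hΩ hA u p) (mu_diff hΩ hA w p)]
  simp only [Prod.fst_add, map_add, ContinuousLinearMap.add_apply]
  ring

lemma omegaHat_smul_left (hΩ : ContDiff ℝ (⊤ : ℕ∞) Ω) (hA : ContDiff ℝ (⊤ : ℕ∞) A)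
    (c : ℝ) (p u v : (Fin n → ℝ) × (Fin m → ℝ)) :
    omegaHat2 n m ω Ω A p (c • u) v = c * omegaHat2 n m ω Ω A p u v := by
  simp only [omegaHat2, extD1]
  have h : (fun q => connMu2 n m Ω A q (c • u))
      = fun q => c • connMu2 n m Ω A q u := by
    funext q; rw [mu_smul_right c q u]; simp [smul_eq_mul]
  rw [h, fderiv_fun_const_smul (mu_diff hΩ hA u p) c]
  simp only [Prod.smul_fst, map_smul, ContinuousLinearMap.smul_apply, smul_eq_mul]
  ring

/-- `omegaHat2` as a bilinear form at each point. -/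
noncomputable def omegaHatBilin (ω : (Fin n → ℝ) → ((Fin n → ℝ) →L[ℝ] (Fin n → ℝ) →L[ℝ] ℝ))
    (Ω : (Fin n → ℝ) → ((Fin m → ℝ) →L[ℝ] (Fin m → ℝ) →L[ℝ] ℝ))
    (A : (Fin n → ℝ) → ((Fin n → ℝ) →L[ℝ] ((Fin m → ℝ) →L[ℝ] (Fin m → ℝ))))
    (hΩ : ContDiff ℝ (⊤ : ℕ∞) Ω) (hA : ContDiff ℝ (⊤ : ℕ∞) A)
    (p : (Fin n → ℝ) × (Fin m → ℝ)) :
    LinearMap.BilinForm ℝ ((Fin n → ℝ) × (Fin m → ℝ)) :=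
  LinearMap.mk₂ ℝ (omegaHat2 n m ω Ω A p)
    (omegaHat_add_left hΩ hA p)
    (fun c u v => omegaHat_smul_left hΩ hA c p u v)
    (omegaHat_add_right hΩ hA p)
    (fun c u v => omegaHat_smul_right hΩ hA c p u v)

-- continuity in p of omegaHat2 p u v for fixed u v
lemma omegaHat_cont (hω : ContDiff ℝ (⊤ : ℕ∞) ω) (hΩ : ContDiff ℝ (⊤ : ℕ∞) Ω) (hA : ContDiff ℝ (⊤ : ℕ∞) A)
    (u v : (Fin n → ℝ) × (Fin m → ℝ)) :
    Continuous (fun p => omegaHat2 n m ω Ω A p u v) := by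
  have hc : ∀ w : (Fin n → ℝ) × (Fin m → ℝ),
      Continuous (fun p => fderiv ℝ (fun q => connMu2 n m Ω A q w) p) := by
    intro w
    exact ((mu_contDiff hΩ hA w).fderiv_right (m := (⊤ : ℕ∞)) (by simp)).continuous
  have h1 : Continuous (fun p : (Fin n → ℝ) × (Fin m → ℝ) => ω p.1 u.1 v.1) :=
    ((hω.continuous.comp continuous_fst).clm_apply continuous_const).clm_apply continuous_const
  have h2 : Continuous (fun p => (fderiv ℝ (fun q => connMu2 n m Ω A q v) p) u) :=
    (hc v).clm_apply continuous_const
  have h3 : Continuous (fun p => (fderiv ℝ (fun q => connMu2 n m Ω A q u) p) v) :=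
    (hc u).clm_apply continuous_const
  simp only [omegaHat2, extD1]; exact h1.add (h2.sub h3)

end Main


/-- trivialized form: for a vector bundle `𝒩 = V × F` over a manifold `V`
with symplectic form `ω`, a fiberwise symplectic form `Ω` on `𝒩`, and a compatible
connection `∇ = d + A`, the closed 2-form `ω̂ = π*ω + (1/2)d(ι_{ζ_𝒩}Ω_∇)` on the total
space of `𝒩` is nondegenerate at every point of the zero section, and hence symplectic
(nondegenerate) on a neighborhood of the zero section in `𝒩`. -/
theorem stmt14 (n m : ℕ)
    (ω : (Fin n → ℝ) → ((Fin n → ℝ) →L[ℝ] (Fin n → ℝ) →L[ℝ] ℝ))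
    (hω_smooth : ContDiff ℝ (⊤ : ℕ∞) ω)
    (hω_alt : ∀ x u, ω x u u = 0)
    (hω_closed : ∀ x u v w : Fin n → ℝ, extD2 (fun q r t => ω q r t) x u v w = 0)
    (hω_nd : ∀ x u, (∀ v, ω x u v = 0) → u = 0)
    (Ω : (Fin n → ℝ) → ((Fin m → ℝ) →L[ℝ] (Fin m → ℝ) →L[ℝ] ℝ))
    (hΩ_smooth : ContDiff ℝ (⊤ : ℕ∞) Ω)
    (hΩ_alt : ∀ x φ, Ω x φ φ = 0)
    (hΩ_nd : ∀ x φ, (∀ ψ, Ω x φ ψ = 0) → φ = 0)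
    (A : (Fin n → ℝ) → ((Fin n → ℝ) →L[ℝ] ((Fin m → ℝ) →L[ℝ] (Fin m → ℝ))))
    (hA_smooth : ContDiff ℝ (⊤ : ℕ∞) A) :
    (∀ (x : Fin n → ℝ) (u : (Fin n → ℝ) × (Fin m → ℝ)),
      (∀ v, omegaHat2 n m ω Ω A (x, 0) u v = 0) → u = 0) ∧
    (∃ U : Set ((Fin n → ℝ) × (Fin m → ℝ)), IsOpen U ∧
      (∀ x : Fin n → ℝ, (x, (0 : Fin m → ℝ)) ∈ U) ∧
      ∀ p ∈ U, ∀ u : (Fin n → ℝ) × (Fin m → ℝ),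
        (∀ v, omegaHat2 n m ω Ω A p u v = 0) → u = 0) := by
  have hzero : ∀ (x : Fin n → ℝ) (u : (Fin n → ℝ) × (Fin m → ℝ)),
      (∀ v, omegaHat2 n m ω Ω A (x, 0) u v = 0) → u = 0 := by
    intro x u hu
    have key : ∀ v : (Fin n → ℝ) × (Fin m → ℝ), ω x u.1 v.1 + Ω x u.2 v.2 = 0 := by
      intro v
      rw [← omegaHat_zero hΩ_smooth hA_smooth hΩ_alt x u v]
      exact hu v
    have h1 : u.1 = 0 := by
      apply hω_nd x
      intro w
      have := key (w, 0)
      simpa using this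
    have h2 : u.2 = 0 := by
      apply hΩ_nd x
      intro ψ
      have := key (0, ψ)
      simpa using this
    exact Prod.ext h1 h2
  refine ⟨hzero, ?_⟩
  classical
  set b : Module.Basis (Fin n ⊕ Fin m) ℝ ((Fin n → ℝ) × (Fin m → ℝ)) :=
    (Pi.basisFun ℝ (Fin n)).prod (Pi.basisFun ℝ (Fin m)) with hb
  set M : ((Fin n → ℝ) × (Fin m → ℝ)) → Matrix (Fin n ⊕ Fin m) (Fin n ⊕ Fin m) ℝ :=
    fun p => BilinForm.toMatrix b (omegaHatBilin ω Ω A hΩ_smooth hA_smooth p) with hM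
  have hMcont : Continuous fun p => (M p).det := by
    apply Continuous.matrix_det
    apply continuous_matrix
    intro i j
    have : (fun p => M p i j) = fun p => omegaHat2 n m ω Ω A p (b i) (b j) := by
      funext p
      simp [hM, BilinForm.toMatrix, LinearMap.BilinForm.toMatrix_apply, omegaHatBilin]
    rw [this]
    exact omegaHat_cont hω_smooth hΩ_smooth hA_smooth (b i) (b j)
  have hndiff : ∀ p, (omegaHatBilin ω Ω A hΩ_smooth hA_smooth p).Nondegenerate ↔
      (M p).det ≠ 0 := fun p =>
    LinearMap.BilinForm.nondegenerate_iff_det_ne_zero b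
  refine ⟨{p | (M p).det ≠ 0}, ?_, ?_, ?_⟩
  · exact isOpen_ne_fun hMcont continuous_const
  · intro x
    show (M (x, 0)).det ≠ 0
    rw [← hndiff]
    refine LinearMap.BilinForm.Nondegenerate.ofSeparatingLeft ?_
    intro u hu
    exact hzero x u (fun v => hu v)
  · intro p hp u hu
    exact ((hndiff p).mpr hp).1 u hu
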